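/- Let G and G' be isomorphic simple connected graphs on vertex set {1,…,n} such that P_G (and hence P_{G'}) is reflexive. Then the linear codes C(P_G) and C(P_{G'}) are permutation equivalent: there exists a permutation σ of {1,…,n} such that for every codeword (c_1,…,c_n) ∈ C(P_G), the word (c_{σ(1)},…,c_{σ(n)}) lies in C(P_{G'}). -/
import Mathlib


open Matrix Finset

/-- The number of spanning trees of `G`: spanning subgraphs of `G` which are trees. -/
noncomputable def spanningTreeCount {V : Type*} (G : SimpleGraph V) : ℕ :=
  Nat.card {H : SimpleGraph V // H ≤ G ∧ H.IsTree}

/-- The integer Laplacian matrix of a graph on `Fin m`. -/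
noncomputable def lap {m : ℕ} (G : SimpleGraph (Fin m)) : Matrix (Fin m) (Fin m) ℤ :=
  letI : DecidableRel G.Adj := fun _ _ => Classical.dec _
  SimpleGraph.lapMatrix ℤ G

/-- The matrix `[L_G(m) | 𝟙]` : the Laplacian with its last column deleted and a column
of all ones appended. -/
noncomputable def lapAug {m : ℕ} (G : SimpleGraph (Fin m)) : Matrix (Fin m) (Fin m) ℤ :=
  Matrix.of fun r j => if (j : ℕ) + 1 = m then 1 else lap G r j

/-- The Laplacian matrix with its `i`-th column deleted. -/
noncomputable def lapDel {k : ℕ} (G : SimpleGraph (Fin (k+1))) (i : Fin (k+1)) :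
    Matrix (Fin (k+1)) (Fin k) ℤ :=
  (lap G).submatrix id i.succAbove

/-- `Λ(P)` for a simplex whose augmented vertex matrix is `M`: the fractional vectors
`λ` with `0 ≤ λᵢ < 1` such that `λ·M` has integer entries. -/
def Lambda {m : ℕ} (M : Matrix (Fin m) (Fin m) ℤ) : Set (Fin m → ℚ) :=
  {lam | (∀ i, 0 ≤ lam i ∧ lam i < 1) ∧
    ∀ j, ∃ z : ℤ, (Matrix.vecMul lam (M.map (fun a : ℤ => (a : ℚ)))) j = (z : ℚ)}

/-- The Laplacian simplex `P_G ⊆ ℝ^{m-1}` : the convex hull of the rows of the Laplacian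
matrix with its last column deleted. -/
noncomputable def PG {m : ℕ} (G : SimpleGraph (Fin m)) : Set (Fin (m-1) → ℝ) :=
  convexHull ℝ (Set.range fun r : Fin m => fun j : Fin (m-1) =>
    (lap G r ⟨(j : ℕ), by have := j.isLt; omega⟩ : ℝ))

/-- A polytope `P` (with `0` in its interior) is reflexive if its dual
`{x | x·y ≤ 1 ∀ y ∈ P}` is a lattice polytope, i.e. the convex hull of finitely many
integer points. -/
def IsReflexive {d : ℕ} (P : Set (Fin d → ℝ)) : Prop :=
  (0 : Fin d → ℝ) ∈ interior P ∧
  ∃ S : Finset (Fin d → ℝ), (∀ v ∈ S, ∀ i, ∃ z : ℤ, v i = (z : ℝ)) ∧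
    {x : Fin d → ℝ | ∀ y ∈ P, ∑ i, x i * y i ≤ 1} = convexHull ℝ (S : Set (Fin d → ℝ))

/-- The linear code over `ℤ/m` associated to a (reflexive) Laplacian simplex:
`C(P_G) = { x mod m : x/m ∈ Λ(P_G) }`. -/
def code {m : ℕ} (G : SimpleGraph (Fin m)) : Set (Fin m → ZMod m) :=
  {c | ∃ x : Fin m → ℤ, (∀ i, (x i : ZMod m) = c i) ∧
    (fun i => (x i : ℚ) / (m : ℚ)) ∈ Lambda (lapAug G)}


private lemma iso_degree {m : ℕ} {G G' : SimpleGraph (Fin m)} (e : G ≃g G') (v : Fin m)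
    {i1 : Fintype (G'.neighborSet (e v))} {i2 : Fintype (G.neighborSet v)} :
    @SimpleGraph.degree _ G' (e v) i1 = @SimpleGraph.degree _ G v i2 := by
  unfold SimpleGraph.degree SimpleGraph.neighborFinset
  rw [Set.toFinset_card, Set.toFinset_card, ← Nat.card_eq_fintype_card,
    ← Nat.card_eq_fintype_card]
  exact Nat.card_congr (e.mapNeighborSet v).symm

private lemma lap_iso {m : ℕ} {G G' : SimpleGraph (Fin m)} (e : G ≃g G') (i j : Fin m) :
    lap G' i j = lap G (e.symm i) (e.symm j) := by
  classical
  unfold lap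
  simp only [SimpleGraph.lapMatrix, Matrix.sub_apply, SimpleGraph.degMatrix,
    SimpleGraph.adjMatrix_apply, Matrix.of_apply]
  have hadj : G'.Adj i j ↔ G.Adj (e.symm i) (e.symm j) := by
    constructor
    · intro h; exact e.symm.map_adj_iff.mpr h
    · intro h
      have := e.map_adj_iff.mpr h
      simpa using this
  have heq : (i = j) ↔ (e.symm i = e.symm j) := by
    constructor
    · rintro rfl; rfl
    · intro h; exact e.symm.toEquiv.injective h
  by_cases hij : i = j
  · subst hij
    simp only [hadj, Matrix.diagonal_apply_eq]
    rw [iso_degree e.symm i]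
  · have hij' : ¬ (e.symm i = e.symm j) := fun h => hij (heq.mpr h)
    simp [hij, hij', hadj]

private lemma lap_rowsum {m : ℕ} (G : SimpleGraph (Fin m)) (i : Fin m) :
    ∑ j, lap G i j = 0 := by
  classical
  have h := congrFun (SimpleGraph.lapMatrix_mulVec_const_eq_zero (R := ℤ) (G := G)) i
  unfold lap
  simpa [Matrix.mulVec, dotProduct] using h

/-- If `G` and `G'` are isomorphic simple connected graphs on `n+1`
vertices and `P_G` (hence `P_{G'}`) is reflexive, then the codes `C(P_G)` and `C(P_{G'})`
are permutation equivalent. -/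
theorem code_permutation_equivalent {n : ℕ}
    (G G' : SimpleGraph (Fin (n+1))) (hG : G.Connected)
    (hiso : Nonempty (G ≃g G')) (href : IsReflexive (PG G)) :
    ∃ σ : Equiv.Perm (Fin (n+1)),
      ∀ c ∈ code G, (fun i => c (σ i)) ∈ code G' := by
  classical
  obtain ⟨e⟩ := hiso
  refine ⟨e.toEquiv.symm, ?_⟩
  rintro c ⟨x, hx, hlam, hint⟩
  have key : ∀ (H : SimpleGraph (Fin (n+1))) (lam : Fin (n+1) → ℚ) (k : Fin (n+1)),
      (¬ ((k:ℕ)+1 = n+1)) →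
      (Matrix.vecMul lam ((lapAug H).map (fun a : ℤ => (a : ℚ)))) k
        = ∑ i, lam i * (lap H i k : ℚ) := by
    intro H lam k hk
    simp only [Matrix.vecMul, dotProduct, Matrix.map_apply, lapAug, Matrix.of_apply, hk,
      if_false]
  -- every column of lam ⬝ (lap G) is integral
  have hcol : ∀ k : Fin (n+1),
      ∃ z : ℤ, ∑ i, ((x i : ℚ) / ((n+1 : ℕ) : ℚ)) * (lap G i k : ℚ) = (z : ℚ) := by
    intro k
    by_cases hk : (k:ℕ)+1 = n+1
    · -- last column = - sum of the others
      have hlast : ∀ i : Fin (n+1), (lap G i k : ℚ)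
          = - ∑ l ∈ Finset.univ.erase k, (lap G i l : ℚ) := by
        intro i
        have h0 : ((∑ l, lap G i l : ℤ) : ℚ) = 0 := by rw [lap_rowsum G i]; simp
        push_cast at h0
        rw [← Finset.add_sum_erase _ _ (Finset.mem_univ k)] at h0
        linarith
      have hothers : ∀ l ∈ Finset.univ.erase k, ∃ z : ℤ,
          ∑ i, ((x i : ℚ) / ((n+1 : ℕ) : ℚ)) * (lap G i l : ℚ) = (z : ℚ) := by
        intro l hl
        have hlne : ¬ ((l:ℕ)+1 = n+1) := by
          have := (Finset.mem_erase.mp hl).1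
          intro hcon
          apply this
          apply Fin.ext
          omega
        obtain ⟨z, hz⟩ := hint l
        refine ⟨z, ?_⟩
        rw [← hz, key G _ l hlne]
      choose f hf using hothers
      refine ⟨- ∑ l ∈ (Finset.univ.erase k).attach, f l.1 l.2, ?_⟩
      calc ∑ i, ((x i : ℚ) / ((n+1 : ℕ) : ℚ)) * (lap G i k : ℚ)
          = ∑ i, - ∑ l ∈ Finset.univ.erase k,
              ((x i : ℚ) / ((n+1 : ℕ) : ℚ)) * (lap G i l : ℚ) := by
            refine Finset.sum_congr rfl fun i _ => ?_
            rw [hlast i, mul_neg, Finset.mul_sum]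
        _ = - ∑ l ∈ Finset.univ.erase k, ∑ i,
              ((x i : ℚ) / ((n+1 : ℕ) : ℚ)) * (lap G i l : ℚ) := by
            rw [Finset.sum_neg_distrib, Finset.sum_comm]
        _ = - ∑ l ∈ (Finset.univ.erase k).attach, ((f l.1 l.2 : ℚ)) := by
            rw [← Finset.sum_attach (Finset.univ.erase k)
              (fun l => ∑ i, ((x i : ℚ) / ((n+1 : ℕ) : ℚ)) * (lap G i l : ℚ))]
            congr 1
            exact Finset.sum_congr rfl fun l _ => hf l.1 l.2
        _ = ((- ∑ l ∈ (Finset.univ.erase k).attach, f l.1 l.2 : ℤ) : ℚ) := by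
            push_cast
            ring
    · obtain ⟨z, hz⟩ := hint k
      refine ⟨z, ?_⟩
      rw [← hz, key G _ k hk]
  refine ⟨fun i => x (e.symm i), fun i => hx (e.symm i), ?_, ?_⟩
  · intro i; exact hlam (e.symm i)
  · intro j
    by_cases hj : (j : ℕ) + 1 = n + 1
    · -- last column: all ones
      obtain ⟨z, hz⟩ := hint j
      refine ⟨z, ?_⟩
      rw [← hz]
      simp only [Matrix.vecMul, dotProduct, Matrix.map_apply, lapAug, Matrix.of_apply, hj,
        if_true]
      exact Fintype.sum_equiv e.toEquiv.symm _ _ (fun i => rfl)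
    · obtain ⟨z, hz⟩ := hcol (e.symm j)
      refine ⟨z, ?_⟩
      rw [key G' _ j hj, ← hz]
      refine Fintype.sum_equiv e.toEquiv.symm _ _ (fun i => ?_)
      simp only [Equiv.symm_apply_apply]
      rw [lap_iso e i j]
      rfl
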